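/- arXiv:1408.5610 — 2 statements merged into one kernel-verified Lean document; each statement's English description precedes it below -/
import Mathlib

section
/- Conversely to the Helmholtz conditions in one variable: let F(x, y, p) and F¹(x, y, p) be smooth functions on a convex open domain satisfying F¹_p + F_x + p·F_y = 0. Then there exists a smooth first-order Lagrangian f(x, y, p) with f_{pp} = F and f_y - f_{px} - p·f_{py} = F¹, so that F¹ - F·q is the Euler–Lagrange expression of f. -/
open MeasureTheory intervalIntegral Metric Set Filter
open scoped Topology NNReal ENNReal ContDiff

namespace Stmt6Aux

variable {E : Type*} [NormedAddCommGroup E] [NormedSpace ℝ E]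

/-- slice derivative for functions of two real variables -/
lemma hasDerivAt_slice1 {g : ℝ × ℝ → ℝ} {x t : ℝ} (hgd : DifferentiableAt ℝ g (x, t)) :
    HasDerivAt (fun x' => g (x', t)) (fderiv ℝ g (x, t) (1, 0)) x :=
  hgd.hasFDerivAt.comp_hasDerivAt x ((hasDerivAt_id x).prodMk (hasDerivAt_const x t))

/-- Differentiation under the integral sign, one real parameter. -/
lemma hasDerivAt_paramInt {g : ℝ × ℝ → ℝ} (hg : ContDiff ℝ ∞ g) (a b x₀ : ℝ) :
    HasDerivAt (fun x => ∫ t in a..b, g (x, t))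
      (∫ t in a..b, fderiv ℝ g (x₀, t) (1, 0)) x₀ := by
  have hgd : Differentiable ℝ g := hg.differentiable (by simp)
  have hgc : Continuous g := hg.continuous
  have hfc : Continuous (fderiv ℝ g) := hg.continuous_fderiv (by simp)
  set K : Set (ℝ × ℝ) := closedBall x₀ 1 ×ˢ uIcc a b with hK
  have hKc : IsCompact K := (isCompact_closedBall _ _).prod isCompact_uIcc
  obtain ⟨C, hC⟩ := hKc.exists_bound_of_continuousOn hfc.continuousOn
  have := intervalIntegral.hasDerivAt_integral_of_dominated_loc_of_deriv_le
    (F := fun x t => g (x, t)) (F' := fun x t => fderiv ℝ g (x, t) (1, 0))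
    (bound := fun _ => C) (a := a) (b := b) (x₀ := x₀) (s := ball x₀ 1) (μ := volume) (ball_mem_nhds x₀ one_pos)
    ?_ ?_ ?_ ?_ ?_ ?_
  · exact this.2
  · exact Eventually.of_forall fun x =>
      ((hgc.comp (Continuous.prodMk_right x)).aestronglyMeasurable)
  · exact (hgc.comp (Continuous.prodMk_right x₀)).intervalIntegrable _ _
  · exact (((hfc.comp (Continuous.prodMk_right x₀)).clm_apply continuous_const)).aestronglyMeasurable
  · refine ae_of_all _ fun t ht x hx => ?_
    have hmem : (x, t) ∈ K := mk_mem_prod (ball_subset_closedBall hx) (uIoc_subset_uIcc ht)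
    calc ‖fderiv ℝ g (x, t) (1, 0)‖ ≤ ‖fderiv ℝ g (x, t)‖ * ‖((1:ℝ), (0:ℝ))‖ :=
          (fderiv ℝ g (x, t)).le_opNorm _
      _ ≤ C * 1 := by
          refine mul_le_mul (hC _ hmem) ?_ (norm_nonneg _)
            (le_trans (norm_nonneg _) (hC _ hmem))
          rw [Prod.norm_def]; simp
      _ = C := mul_one C
  · exact intervalIntegrable_const
  · exact ae_of_all _ fun t ht x hx => hasDerivAt_slice1 (hgd (x, t))

/-- FTC wrapper. -/
lemma hasDerivAt_prim {h : ℝ → ℝ} (hc : Continuous h) (a p : ℝ) :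
    HasDerivAt (fun u => ∫ s in a..u, h s) (h p) p :=
  intervalIntegral.integral_hasDerivAt_right (hc.intervalIntegrable _ _)
    (hc.stronglyMeasurableAtFilter _ _) hc.continuousAt

/-- slice derivative in the third coordinate of ℝ³ -/
lemma hasDerivAt_slice3 {g : ℝ × ℝ × ℝ → ℝ} {x y s : ℝ}
    (hgd : DifferentiableAt ℝ g (x, y, s)) :
    HasDerivAt (fun s' => g (x, y, s')) (fderiv ℝ g (x, y, s) (0, 0, 1)) s :=
  hgd.hasFDerivAt.comp_hasDerivAt s
    ((hasDerivAt_const s x).prodMk ((hasDerivAt_const s y).prodMk (hasDerivAt_id s)))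


/-- Fréchet derivative of a parametric interval integral. -/
lemma hasFDerivAt_paramInt' {E F : Type} [NormedAddCommGroup E] [NormedSpace ℝ E] [ProperSpace E]
    [NormedAddCommGroup F] [NormedSpace ℝ F] [CompleteSpace F]
    {K : E × ℝ → F} (hK : ContDiff ℝ 1 K) (a b : ℝ) (w₀ : E) :
    HasFDerivAt (fun w => ∫ t in a..b, K (w, t))
      (∫ t in a..b, (fderiv ℝ K (w₀, t)).comp (ContinuousLinearMap.inl ℝ E ℝ)) w₀ := by
  have hKd : Differentiable ℝ K := hK.differentiable one_ne_zero
  have hKc : Continuous K := hK.continuous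
  set P : E × ℝ → (E →L[ℝ] F) := fun z => (fderiv ℝ K z).comp (ContinuousLinearMap.inl ℝ E ℝ)
    with hP
  have hPc : Continuous P := (hK.continuous_fderiv one_ne_zero).clm_comp continuous_const
  set S : Set (E × ℝ) := closedBall w₀ 1 ×ˢ uIcc a b with hS
  have hSc : IsCompact S := (isCompact_closedBall _ _).prod isCompact_uIcc
  obtain ⟨C, hC⟩ := hSc.exists_bound_of_continuousOn hPc.continuousOn
  refine intervalIntegral.hasFDerivAt_integral_of_dominated_of_fderiv_le
    (F := fun x t => K (x, t)) (F' := fun x t => P (x, t))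
    (bound := fun _ => C) (s := ball w₀ 1) (μ := volume) (ball_mem_nhds w₀ one_pos)
    ?_ ?_ ?_ ?_ ?_ ?_
  · exact Eventually.of_forall fun x =>
      ((hKc.comp (Continuous.prodMk_right x)).aestronglyMeasurable)
  · exact (hKc.comp (Continuous.prodMk_right w₀)).intervalIntegrable _ _
  · exact (hPc.comp (Continuous.prodMk_right w₀)).aestronglyMeasurable
  · refine ae_of_all _ fun t ht x hx => ?_
    exact hC _ (mk_mem_prod (ball_subset_closedBall hx) (uIoc_subset_uIcc ht))
  · exact intervalIntegrable_const
  · refine ae_of_all _ fun t ht x hx => ?_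
    exact (hKd (x, t)).hasFDerivAt.comp x (hasFDerivAt_prodMk_left x t)

lemma contDiff_paramInt_nat {E : Type} [NormedAddCommGroup E] [NormedSpace ℝ E] [ProperSpace E]
    (a b : ℝ) (n : ℕ) : ∀ (F : Type) [NormedAddCommGroup F] [NormedSpace ℝ F] [CompleteSpace F]
    (K : E × ℝ → F), ContDiff ℝ ∞ K → ContDiff ℝ n (fun w => ∫ t in a..b, K (w, t)) := by
  induction n with
  | zero =>
    intro F _ _ _ K hK
    refine contDiff_zero.2 (Differentiable.continuous (𝕜 := ℝ) fun w => ?_)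
    exact (hasFDerivAt_paramInt' (hK.of_le (by simp)) a b w).differentiableAt
  | succ n ih =>
    intro F _ _ _ K hK
    rw [show ((n + 1 : ℕ) : WithTop ℕ∞) = (n : WithTop ℕ∞) + 1 by norm_cast,
      contDiff_succ_iff_hasFDerivAt]
    have hP : ContDiff ℝ ∞ (fun z => (fderiv ℝ K z).comp (ContinuousLinearMap.inl ℝ E ℝ)) :=
      (hK.fderiv_right (m := ∞) (by simp)).clm_comp contDiff_const
    exact ⟨_, ih (E →L[ℝ] F) _ hP,
      fun w => hasFDerivAt_paramInt' (hK.of_le (by simp)) a b w⟩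

lemma contDiff_primitive {E : Type} [NormedAddCommGroup E] [NormedSpace ℝ E] [ProperSpace E]
    {H : E × ℝ → ℝ} (hH : ContDiff ℝ ∞ H) :
    ContDiff ℝ ∞ (fun w : E × ℝ => ∫ s in (0:ℝ)..w.2, H (w.1, s)) := by
  have heq : (fun w : E × ℝ => ∫ s in (0:ℝ)..w.2, H (w.1, s))
      = fun w : E × ℝ => w.2 • ∫ t in (0:ℝ)..1, H (w.1, w.2 * t) := by
    funext w
    rw [intervalIntegral.smul_integral_comp_mul_left (f := fun s => H (w.1, s))]
    simp
  rw [heq]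
  have hK : ContDiff ℝ ∞ (fun z : (E × ℝ) × ℝ => H (z.1.1, z.1.2 * z.2)) :=
    hH.comp (f := fun z : (E × ℝ) × ℝ => (z.1.1, z.1.2 * z.2)) (by fun_prop)
  exact contDiff_snd.smul
    (contDiff_infty.2 fun n => contDiff_paramInt_nat 0 1 n ℝ _ hK)

end Stmt6Aux

open Stmt6Aux

/-- Converse Helmholtz condition in one variable. If smooth functions
`F(x,y,p)`, `F¹(x,y,p)` (on the convex domain `ℝ³`) satisfy
`F¹_p + F_x + p·F_y = 0`, then there is a smooth first-order Lagrangian `f` with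
`f_{pp} = F` and `f_y - f_{px} - p·f_{py} = F¹`, so `F¹ - F·q` is its
Euler–Lagrange expression. -/
theorem stmt_6 (F F1 : ℝ → ℝ → ℝ → ℝ)
    (hF : ContDiff ℝ (⊤ : ℕ∞) fun v : ℝ × ℝ × ℝ => F v.1 v.2.1 v.2.2)
    (hF1 : ContDiff ℝ (⊤ : ℕ∞) fun v : ℝ × ℝ × ℝ => F1 v.1 v.2.1 v.2.2)
    (hHelm : ∀ x y p,
      deriv (fun p' => F1 x y p') p + deriv (fun s => F s y p) x
        + p * deriv (fun t => F x t p) y = 0) :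
    ∃ f : ℝ → ℝ → ℝ → ℝ,
      (ContDiff ℝ (⊤ : ℕ∞) fun v : ℝ × ℝ × ℝ => f v.1 v.2.1 v.2.2) ∧
      (∀ x y p, deriv (fun p' => deriv (fun p'' => f x y p'') p') p = F x y p) ∧
      (∀ x y p, deriv (fun t => f x t p) y
          - deriv (fun s => deriv (fun p' => f s y p') p) x
          - p * deriv (fun t => deriv (fun p' => f x t p') p) y = F1 x y p) := by
  have hFc : Continuous (fun v : ℝ × ℝ × ℝ => F v.1 v.2.1 v.2.2) := hF.continuous
  have hF1c : Continuous (fun v : ℝ × ℝ × ℝ => F1 v.1 v.2.1 v.2.2) := hF1.continuous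
  have hF1d : Differentiable ℝ (fun v : ℝ × ℝ × ℝ => F1 v.1 v.2.1 v.2.2) :=
    hF1.differentiable (by simp)
  have hF1fc : Continuous (fderiv ℝ (fun v : ℝ × ℝ × ℝ => F1 v.1 v.2.1 v.2.2)) :=
    hF1.continuous_fderiv (by simp)
  refine ⟨fun x y p => p * (∫ s in (0:ℝ)..p, F x y s) - (∫ s in (0:ℝ)..p, s * F x y s)
      + ∫ u in (0:ℝ)..y, F1 x u 0, ?_, ?_, ?_⟩
  · -- smoothness
    beta_reduce
    have hH1 : ContDiff ℝ ∞ (fun z : (ℝ × ℝ) × ℝ => F z.1.1 z.1.2 z.2) :=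
      hF.comp (f := fun z : (ℝ × ℝ) × ℝ => (z.1.1, z.1.2, z.2)) (by fun_prop)
    have hH2 : ContDiff ℝ ∞ (fun z : (ℝ × ℝ) × ℝ => z.2 * F z.1.1 z.1.2 z.2) :=
      contDiff_snd.mul hH1
    have hH3 : ContDiff ℝ ∞ (fun z : ℝ × ℝ => F1 z.1 z.2 0) :=
      hF1.comp (f := fun z : ℝ × ℝ => (z.1, z.2, (0:ℝ))) (by fun_prop)
    have a1 : ContDiff ℝ ∞ (fun v : ℝ × ℝ × ℝ => ∫ s in (0:ℝ)..v.2.2, F v.1 v.2.1 s) :=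
      (contDiff_primitive hH1).comp (f := fun v : ℝ × ℝ × ℝ => ((v.1, v.2.1), v.2.2)) (by fun_prop)
    have a2 : ContDiff ℝ ∞ (fun v : ℝ × ℝ × ℝ => ∫ s in (0:ℝ)..v.2.2, s * F v.1 v.2.1 s) :=
      (contDiff_primitive hH2).comp (f := fun v : ℝ × ℝ × ℝ => ((v.1, v.2.1), v.2.2)) (by fun_prop)
    have a3 : ContDiff ℝ ∞ (fun v : ℝ × ℝ × ℝ => ∫ u in (0:ℝ)..v.2.1, F1 v.1 u 0) :=
      (contDiff_primitive (E := ℝ) hH3).comp (f := fun v : ℝ × ℝ × ℝ => (v.1, v.2.1)) (by fun_prop)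
    have a0 : ContDiff ℝ ∞ (fun v : ℝ × ℝ × ℝ => v.2.2) := by fun_prop
    exact ((a0.mul a1).sub a2).add a3
  case' refine_2 => intro x y p
  case' refine_3 => intro x y p
  all_goals (
    beta_reduce
    have hfp : ∀ x y p : ℝ, HasDerivAt (fun p' : ℝ => p' * (∫ s in (0:ℝ)..p', F x y s)
        - (∫ s in (0:ℝ)..p', s * F x y s) + ∫ u in (0:ℝ)..y, F1 x u 0)
        (∫ s in (0:ℝ)..p, F x y s) p := by
      intro x y p
      have hcF : Continuous (fun s : ℝ => F x y s) :=
        hFc.comp (continuous_const.prodMk (continuous_const.prodMk continuous_id))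
      have h1 := hasDerivAt_prim hcF 0 p
      have hcsF : Continuous (fun s : ℝ => s * F x y s) := continuous_id.mul hcF
      have h2 := hasDerivAt_prim hcsF 0 p
      have h3 : HasDerivAt (fun p' : ℝ => p' * ∫ s in (0:ℝ)..p', F x y s)
          (1 * (∫ s in (0:ℝ)..p, F x y s) + p * F x y p) p := (hasDerivAt_id p).mul h1
      have h4 := (h3.sub h2).add_const (∫ u in (0:ℝ)..y, F1 x u 0)
      refine h4.congr_deriv ?_
      ring
    have hrwp : ∀ x y p : ℝ, (fun p' : ℝ => deriv (fun p'' : ℝ =>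
        p'' * (∫ s in (0:ℝ)..p'', F x y s)
        - (∫ s in (0:ℝ)..p'', s * F x y s) + ∫ u in (0:ℝ)..y, F1 x u 0) p')
        = fun p' : ℝ => ∫ s in (0:ℝ)..p', F x y s :=
      fun x y p => funext fun p' => (hfp x y p').deriv
    skip)
  case refine_2 =>
    have hcF : Continuous (fun s : ℝ => F x y s) :=
      hFc.comp (continuous_const.prodMk (continuous_const.prodMk continuous_id))
    rw [hrwp x y p]
    exact (hasDerivAt_prim hcF 0 p).deriv
  case refine_3 =>
    have hfpd : ∀ x y p : ℝ, deriv (fun p' : ℝ => p' * (∫ s in (0:ℝ)..p', F x y s)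
        - (∫ s in (0:ℝ)..p', s * F x y s) + ∫ u in (0:ℝ)..y, F1 x u 0) p
        = ∫ s in (0:ℝ)..p, F x y s := fun x y p => (hfp x y p).deriv
    -- slice functions
    set gy : ℝ × ℝ → ℝ := fun z => F x z.1 z.2 with hgy
    set gx : ℝ × ℝ → ℝ := fun z => F z.1 y z.2 with hgx
    set gys : ℝ × ℝ → ℝ := fun z => z.2 * F x z.1 z.2 with hgys
    have hgyω : ContDiff ℝ ∞ gy := hF.comp (contDiff_const.prodMk contDiff_id)
    have hgxω : ContDiff ℝ ∞ gx :=
      hF.comp (contDiff_fst.prodMk (contDiff_const.prodMk contDiff_snd))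
    have hgysω : ContDiff ℝ ∞ gys := contDiff_snd.mul hgyω
    set Dy : ℝ → ℝ := fun s => fderiv ℝ gy (y, s) (1, 0) with hDydef
    set Dx : ℝ → ℝ := fun s => fderiv ℝ gx (x, s) (1, 0) with hDxdef
    set Dys : ℝ → ℝ := fun s => fderiv ℝ gys (y, s) (1, 0) with hDysdef
    set D1 : ℝ → ℝ := fun s =>
      fderiv ℝ (fun v : ℝ × ℝ × ℝ => F1 v.1 v.2.1 v.2.2) (x, y, s) (0, 0, 1) with hD1def
    have hDy : ∀ s : ℝ, HasDerivAt (fun t => F x t s) (Dy s) y := fun s =>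
      hasDerivAt_slice1 (hgyω.differentiable (by simp) (y, s))
    have hDx : ∀ s : ℝ, HasDerivAt (fun x' => F x' y s) (Dx s) x := fun s =>
      hasDerivAt_slice1 (hgxω.differentiable (by simp) (x, s))
    have hDys : ∀ s : ℝ, HasDerivAt (fun t => s * F x t s) (Dys s) y := fun s =>
      hasDerivAt_slice1 (hgysω.differentiable (by simp) (y, s))
    have hD1 : ∀ s : ℝ, HasDerivAt (fun p' => F1 x y p') (D1 s) s := fun s =>
      hasDerivAt_slice3 (hF1d (x, y, s))
    have hDys' : ∀ s : ℝ, Dys s = s * Dy s := fun s =>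
      HasDerivAt.unique (hDys s) ((hDy s).const_mul s)
    -- continuity of the partial-derivative integrands
    have hcDy : Continuous Dy := ((hgyω.continuous_fderiv (by simp)).comp
      (Continuous.prodMk_right y)).clm_apply continuous_const
    have hcDx : Continuous Dx := ((hgxω.continuous_fderiv (by simp)).comp
      (Continuous.prodMk_right x)).clm_apply continuous_const
    have hcD1 : Continuous D1 := (hF1fc.comp
      (continuous_const.prodMk (continuous_const.prodMk continuous_id))).clm_apply
      continuous_const
    -- first term
    have hcF1 : Continuous (fun u : ℝ => F1 x u 0) :=
      hF1c.comp (continuous_const.prodMk (continuous_id.prodMk continuous_const))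
    have hT1 : HasDerivAt (fun t : ℝ => p * (∫ s in (0:ℝ)..p, F x t s)
        - (∫ s in (0:ℝ)..p, s * F x t s) + ∫ u in (0:ℝ)..t, F1 x u 0)
        (p * (∫ s in (0:ℝ)..p, Dy s) - (∫ s in (0:ℝ)..p, Dys s) + F1 x y 0) y := by
      have c1 := (hasDerivAt_paramInt hgyω 0 p y).const_mul p
      have c2 := hasDerivAt_paramInt hgysω 0 p y
      have c3 := hasDerivAt_prim hcF1 0 y
      exact (c1.sub c2).add c3
    have e1 : deriv (fun t : ℝ => p * (∫ s in (0:ℝ)..p, F x t s)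
        - (∫ s in (0:ℝ)..p, s * F x t s) + ∫ u in (0:ℝ)..t, F1 x u 0) y
        = p * (∫ s in (0:ℝ)..p, Dy s) - (∫ s in (0:ℝ)..p, Dys s) + F1 x y 0 := hT1.deriv
    have e2 : deriv (fun s' : ℝ => ∫ s in (0:ℝ)..p, F s' y s) x = ∫ s in (0:ℝ)..p, Dx s :=
      (hasDerivAt_paramInt hgxω 0 p x).deriv
    have e3 : deriv (fun t : ℝ => ∫ s in (0:ℝ)..p, F x t s) y = ∫ s in (0:ℝ)..p, Dy s :=
      (hasDerivAt_paramInt hgyω 0 p y).deriv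
    -- rewrite the goal
    rw [show (fun s' : ℝ => deriv (fun p' : ℝ => p' * (∫ s in (0:ℝ)..p', F s' y s)
        - (∫ s in (0:ℝ)..p', s * F s' y s) + ∫ u in (0:ℝ)..y, F1 s' u 0) p)
        = fun s' : ℝ => ∫ s in (0:ℝ)..p, F s' y s from funext fun s' => hfpd s' y p]
    rw [show (fun t : ℝ => deriv (fun p' : ℝ => p' * (∫ s in (0:ℝ)..p', F x t s)
        - (∫ s in (0:ℝ)..p', s * F x t s) + ∫ u in (0:ℝ)..t, F1 x u 0) p)
        = fun t : ℝ => ∫ s in (0:ℝ)..p, F x t s from funext fun t => hfpd x t p]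
    rw [e1, e2, e3]
    -- integral identities
    have hIys : (∫ s in (0:ℝ)..p, Dys s) = ∫ s in (0:ℝ)..p, s * Dy s :=
      intervalIntegral.integral_congr (fun s _ => hDys' s)
    have hadd : (∫ s in (0:ℝ)..p, s * Dy s) + (∫ s in (0:ℝ)..p, Dx s)
        = ∫ s in (0:ℝ)..p, (s * Dy s + Dx s) :=
      (intervalIntegral.integral_add ((continuous_id.mul hcDy).intervalIntegrable _ _)
        (hcDx.intervalIntegrable _ _)).symm
    have hHelm' : ∀ s : ℝ, s * Dy s + Dx s = -(D1 s) := by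
      intro s
      have h := hHelm x y s
      rw [(hD1 s).deriv, (hDx s).deriv, (hDy s).deriv] at h
      linarith
    have hneg : (∫ s in (0:ℝ)..p, (s * Dy s + Dx s)) = -∫ s in (0:ℝ)..p, D1 s := by
      rw [intervalIntegral.integral_congr (fun s _ => hHelm' s), intervalIntegral.integral_neg]
    have hFTC2 : (∫ s in (0:ℝ)..p, D1 s) = F1 x y p - F1 x y 0 :=
      intervalIntegral.integral_eq_sub_of_hasDerivAt (fun s _ => hD1 s)
        (hcD1.intervalIntegrable _ _)
    rw [hIys]
    linarith [hadd, hneg, hFTC2]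
end

section
/- For one dependent variable and n independent variables, if f(x₁,…,xₙ, w, w₁,…,wₙ) is a smooth first-order Lagrangian, then with F_{ii'} = f_{wᵢw_{i'}} and F¹ = f_w - Σᵢ f_{wᵢxᵢ} - Σᵢ f_{wᵢw}·wᵢ, the identity (F¹)_{w_{i'}} + Σᵢ (F_{ii'})_{xᵢ} + Σᵢ (F_{ii'})_w·wᵢ = 0 holds for every i' = 1,…,n. -/
section Aux
variable {E : Type*} [NormedAddCommGroup E] [NormedSpace ℝ E]

noncomputable def dd (u : E) (G : E → ℝ) : E → ℝ := fun y => fderiv ℝ G y u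

lemma dd_contDiff {G : E → ℝ} (hG : ContDiff ℝ (⊤ : ℕ∞) G) (u : E) : ContDiff ℝ (⊤ : ℕ∞) (dd u G) :=
  (hG.fderiv_right (by simp)).clm_apply contDiff_const

lemma dd_comm {G : E → ℝ} (hG : ContDiff ℝ (⊤ : ℕ∞) G) (u v : E) : dd u (dd v G) = dd v (dd u G) := by
  funext y
  have hd : ∀ z, HasFDerivAt G (fderiv ℝ G z) z := fun z =>
    ((hG.differentiable (by simp)) z).hasFDerivAt
  have hG' : ContDiff ℝ (⊤ : ℕ∞) (fderiv ℝ G) := hG.fderiv_right (by simp)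
  have h2 : HasFDerivAt (fderiv ℝ G) (fderiv ℝ (fderiv ℝ G) y) y :=
    ((hG'.differentiable (by simp)) y).hasFDerivAt
  have key : ∀ a b : E, dd a (dd b G) y = fderiv ℝ (fderiv ℝ G) y a b := by
    intro a b
    have h := fderiv_clm_apply (c := fderiv ℝ G) (u := fun _ : E => b)
      ((hG'.differentiable (by simp)) y) (differentiableAt_const b)
    simp only [dd, fderiv_fun_const, Pi.zero_apply, ContinuousLinearMap.comp_zero, zero_add] at h
    show fderiv ℝ (fun z => fderiv ℝ G z b) y a = _
    rw [h]
    simp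
  rw [key, key]
  exact second_derivative_symmetric hd h2 u v

lemma hasDerivAt_line {G : E → ℝ} (hG : Differentiable ℝ G) {φ : ℝ → E} {c u : E} {a : ℝ}
    (hφ : φ = fun t => c + (t - a) • u) :
    HasDerivAt (fun t => G (φ t)) (dd u G c) a := by
  subst hφ
  have h1 : HasDerivAt (fun t : ℝ => c + (t - a) • u) u a := by
    simpa using (((hasDerivAt_id a).sub_const a).smul_const u).const_add c
  have h2 := (hG (c + ((a : ℝ) - a) • u)).hasFDerivAt.comp_hasDerivAt a h1
  simp only [sub_self, zero_smul, add_zero] at h2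
  exact h2

end Aux

section Concrete
variable {n : ℕ}

abbrev EE (n : ℕ) := (Fin n → ℝ) × ℝ × (Fin n → ℝ)

lemma updateLine (p : Fin n → ℝ) (i : Fin n) (t : ℝ) :
    Function.update p i t = p + (t - p i) • (Pi.single i 1 : Fin n → ℝ) := by
  funext j
  rcases eq_or_ne j i with h | h
  · subst h; simp
  · simp [Function.update_of_ne h, Pi.single_apply, h]

lemma hP {G : EE n → ℝ} (hG : Differentiable ℝ G)
    (x : Fin n → ℝ) (w : ℝ) (p : Fin n → ℝ) (i : Fin n) :
    HasDerivAt (fun t => G (x, w, Function.update p i t))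
      (dd ((0, 0, Pi.single i 1) : EE n) G (x, w, p)) (p i) := by
  apply hasDerivAt_line hG
  funext t
  rw [updateLine]
  simp [Prod.ext_iff]

lemma hX {G : EE n → ℝ} (hG : Differentiable ℝ G)
    (x : Fin n → ℝ) (w : ℝ) (p : Fin n → ℝ) (i : Fin n) :
    HasDerivAt (fun t => G (Function.update x i t, w, p))
      (dd ((Pi.single i 1, 0, 0) : EE n) G (x, w, p)) (x i) := by
  apply hasDerivAt_line hG
  funext t
  rw [updateLine]
  simp [Prod.ext_iff]

lemma hW {G : EE n → ℝ} (hG : Differentiable ℝ G)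
    (x : Fin n → ℝ) (w : ℝ) (p : Fin n → ℝ) :
    HasDerivAt (fun t => G (x, t, p))
      (dd ((0, 1, 0) : EE n) G (x, w, p)) w := by
  apply hasDerivAt_line hG
  funext t
  simp [Prod.ext_iff]

end Concrete


/-- Partial derivative of `g : (ι → ℝ) → ℝ` with respect to the `i`-th coordinate. -/
noncomputable def pd {ι : Type*} [DecidableEq ι] (i : ι) (g : (ι → ℝ) → ℝ)
    (v : ι → ℝ) : ℝ :=
  deriv (fun t => g (Function.update v i t)) (v i)

/-- For a smooth first-order Lagrangian `f(x₁,…,xₙ, w, w₁,…,wₙ)` with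
`F_{ii'} = f_{wᵢw_{i'}}` and `F¹ = f_w - Σᵢ f_{wᵢxᵢ} - Σᵢ f_{wᵢw}·wᵢ`, the identity
`(F¹)_{w_{i'}} + Σᵢ (F_{ii'})_{xᵢ} + Σᵢ (F_{ii'})_w·wᵢ = 0` holds for every `i'`. -/
theorem stmt_9 (n : ℕ) (f : (Fin n → ℝ) → ℝ → (Fin n → ℝ) → ℝ)
    (hf : ContDiff ℝ (⊤ : ℕ∞) fun v : (Fin n → ℝ) × ℝ × (Fin n → ℝ) => f v.1 v.2.1 v.2.2)
    (F : Fin n → Fin n → (Fin n → ℝ) → ℝ → (Fin n → ℝ) → ℝ)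
    (hF : ∀ i i' x w p, F i i' x w p = pd i (fun a => pd i' (fun b => f x w b) a) p)
    (F1 : (Fin n → ℝ) → ℝ → (Fin n → ℝ) → ℝ)
    (hF1 : ∀ x w p, F1 x w p
      = deriv (fun t => f x t p) w
        - ∑ i, pd i (fun x' => pd i (fun b => f x' w b) p) x
        - ∑ i, deriv (fun t => pd i (fun b => f x t b) p) w * p i)
    (i' : Fin n) (x : Fin n → ℝ) (w : ℝ) (p : Fin n → ℝ) :
    pd i' (fun a => F1 x w a) p
      + (∑ i, pd i (fun x' => F i i' x' w p) x)
      + (∑ i, deriv (fun t => F i i' x t p) w * p i) = 0 := by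

  classical
  set g : EE n → ℝ := fun v => f v.1 v.2.1 v.2.2 with hg_def
  have hg : ContDiff ℝ (⊤ : ℕ∞) g := hf
  set P : Fin n → EE n := fun i => (0, 0, Pi.single i 1) with hP_def
  set X : Fin n → EE n := fun i => (Pi.single i 1, 0, 0) with hX_def
  set W : EE n := (0, 1, 0) with hW_def
  have d0 : Differentiable ℝ g := hg.differentiable (by simp)
  have d1 : ∀ u, Differentiable ℝ (dd u g) := fun u => (dd_contDiff hg u).differentiable (by simp)
  have d2 : ∀ u v, Differentiable ℝ (dd u (dd v g)) := fun u v =>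
    (dd_contDiff (dd_contDiff hg v) u).differentiable (by simp)
  -- F as second derivative
  have hFeq : ∀ i k x w p, F i k x w p = dd (P i) (dd (P k) g) (x, w, p) := by
    intro i k x w p
    rw [hF]
    have h1 : (fun a => pd k (fun b => f x w b) a) = fun a => dd (P k) g (x, w, a) :=
      funext fun a => (hP d0 x w a k).deriv
    rw [h1]
    exact (hP (d1 (P k)) x w p i).deriv
  have e2 : ∀ i, pd i (fun x' => F i i' x' w p) x
      = dd (X i) (dd (P i) (dd (P i') g)) (x, w, p) := by
    intro i
    have h1 : (fun x' => F i i' x' w p) = fun x' => dd (P i) (dd (P i') g) (x', w, p) :=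
      funext fun x' => hFeq i i' x' w p
    rw [h1]
    exact (hX (d2 (P i) (P i')) x w p i).deriv
  have e3 : ∀ i, deriv (fun t => F i i' x t p) w
      = dd W (dd (P i) (dd (P i') g)) (x, w, p) := by
    intro i
    have h1 : (fun t => F i i' x t p) = fun t => dd (P i) (dd (P i') g) (x, t, p) :=
      funext fun t => hFeq i i' x t p
    rw [h1]
    exact (hW (d2 (P i) (P i')) x w p)
      |>.deriv
  -- F1 in terms of dd
  have hF1eq : ∀ x w a, F1 x w a
      = dd W g (x, w, a) - (∑ i, dd (X i) (dd (P i) g) (x, w, a))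
        - ∑ i, dd W (dd (P i) g) (x, w, a) * a i := by
    intro x w a
    rw [hF1]
    congr 1
    · congr 1
      · exact (hW d0 x w a).deriv
      · refine Finset.sum_congr rfl fun i _ => ?_
        have h1 : (fun x' => pd i (fun b => f x' w b) a) = fun x' => dd (P i) g (x', w, a) :=
          funext fun x' => (hP d0 x' w a i).deriv
        rw [h1]
        exact (hX (d1 (P i)) x w a i).deriv
    · refine Finset.sum_congr rfl fun i _ => ?_
      congr 1
      have h1 : (fun t => pd i (fun b => f x t b) a) = fun t => dd (P i) g (x, t, a) :=
        funext fun t => (hP d0 x t a i).deriv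
      rw [h1]
      exact (hW (d1 (P i)) x w a).deriv
  -- term 1
  have e1 : pd i' (fun a => F1 x w a) p
      = dd (P i') (dd W g) (x, w, p)
        - (∑ i, dd (P i') (dd (X i) (dd (P i) g)) (x, w, p))
        - ∑ i, (dd (P i') (dd W (dd (P i) g)) (x, w, p) * p i
            + dd W (dd (P i) g) (x, w, p) * (if i = i' then 1 else 0)) := by
    have hfun : (fun a => F1 x w a)
        = fun a => dd W g (x, w, a) - (∑ i, dd (X i) (dd (P i) g) (x, w, a))
            - ∑ i, dd W (dd (P i) g) (x, w, a) * a i :=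
      funext fun a => hF1eq x w a
    rw [hfun]
    have H1 := hP (d1 W) x w p i'
    have H2 : HasDerivAt
        (fun t => ∑ i, dd (X i) (dd (P i) g) (x, w, Function.update p i' t))
        (∑ i, dd (P i') (dd (X i) (dd (P i) g)) (x, w, p)) (p i') :=
      HasDerivAt.fun_sum fun i _ => hP (fun y => ((dd_contDiff (dd_contDiff hg (P i)) (X i)).differentiable (by simp)) y) x w p i'
    have H3 : HasDerivAt
        (fun t => ∑ i, dd W (dd (P i) g) (x, w, Function.update p i' t)
            * (Function.update p i' t) i)
        (∑ i, (dd (P i') (dd W (dd (P i) g)) (x, w, p) * p i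
            + dd W (dd (P i) g) (x, w, p) * (if i = i' then 1 else 0))) (p i') := by
      refine HasDerivAt.fun_sum fun i _ => ?_
      have ha : HasDerivAt (fun t => (Function.update p i' t) i)
          (if i = i' then (1 : ℝ) else 0) (p i') := by
        rcases eq_or_ne i i' with h | h
        · subst h
          simpa [Function.update_self] using hasDerivAt_id' (p i)
        · simpa [Function.update_of_ne h, h] using hasDerivAt_const (p i') (p i)
      have hb := hP (fun y => ((dd_contDiff (dd_contDiff hg (P i)) W).differentiable (by simp)) y) x w p i'
      have := hb.fun_mul ha
      simpa [Function.update_eq_self] using this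
    exact ((H1.sub H2).sub H3).deriv
  -- commutation
  have c1 : dd (P i') (dd W g) = dd W (dd (P i') g) := dd_comm hg (P i') W
  have cA : ∀ i, dd (X i) (dd (P i) (dd (P i') g)) = dd (P i') (dd (X i) (dd (P i) g)) := by
    intro i
    rw [dd_comm hg (P i) (P i'), dd_comm (dd_contDiff hg (P i)) (X i) (P i')]
  have cW : ∀ i, dd W (dd (P i) (dd (P i') g)) = dd (P i') (dd W (dd (P i) g)) := by
    intro i
    rw [dd_comm hg (P i) (P i'), dd_comm (dd_contDiff hg (P i)) W (P i')]
  rw [e1]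
  simp only [e2, e3, cA, cW, c1, mul_ite, mul_one, mul_zero, Finset.sum_add_distrib,
    Finset.sum_ite_eq', Finset.mem_univ, if_true]
  ring
end
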